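/- The independence complex of the 1-subdivision graph of the complete bipartite graph K_{n,m} is homotopy equivalent to a sphere of dimension n + m − 2, for all positive integers n, m. -/

import Mathlib

open SimpleGraph CategoryTheory

namespace Paper

variable {V : Type} {W : Type}

/-- The 1-subdivision of a graph `G`: each edge is replaced by a path of
length two, by inserting a new vertex (the edge itself) on every edge. -/
def subdiv (G : SimpleGraph V) : SimpleGraph (V ⊕ G.edgeSet) where
  Adj x y :=
    match x, y with
    | Sum.inl v, Sum.inr e => v ∈ (e : Sym2 V)
    | Sum.inr e, Sum.inl v => v ∈ (e : Sym2 V)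
    | _, _ => False
  symm := ⟨by
    rintro (v | e) (w | f) h
    · exact h.elim
    · exact h
    · exact h
    · exact h.elim⟩
  loopless := ⟨by rintro (v | e) h <;> exact h.elim⟩

/-- The geometric realization of the independence complex of a graph:
convex combinations of vertices whose support is an independent set. -/
def indRealization (G : SimpleGraph V) : Type :=
  {f : V → ℝ // (∀ v, 0 ≤ f v) ∧ (∑ᶠ v, f v) = 1 ∧
     ∀ u v, f u ≠ 0 → f v ≠ 0 → ¬ G.Adj u v}

instance (G : SimpleGraph V) : TopologicalSpace (indRealization G) := by
  delta indRealization; infer_instance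

/-- The singular chain complex of a space, with rational coefficients. -/
noncomputable def singularChains (X : Type) [TopologicalSpace X] :
    ChainComplex (ModuleCat ℚ) ℕ :=
  (AlgebraicTopology.alternatingFaceMapComplex (ModuleCat ℚ)).obj
    (((SimplicialObject.whiskering _ _).obj (ModuleCat.free ℚ)).obj
      (TopCat.toSSet.obj (TopCat.of X)))

/-- Nontriviality of the `n`-th singular homology with rational coefficients. -/
def homologyNontrivial (X : Type) [TopologicalSpace X] (n : ℕ) : Prop :=
  Nontrivial ((singularChains X).homology n)

/-- Nontriviality of the reduced singular homology (rational coefficients)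
in degree `n : ℤ`. -/
def reducedHomologyNontrivial (X : Type) [TopologicalSpace X] : ℤ → Prop
  | Int.negSucc 0 => IsEmpty X
  | Int.negSucc (_ + 1) => False
  | Int.ofNat 0 => ∃ x y : X, ¬ Joined x y
  | Int.ofNat (n + 1) => homologyNontrivial X (n + 1)

/-- The Castelnuovo–Mumford regularity of a graph: the largest `j` such that
some induced subcomplex of the independence complex has nontrivial reduced
homology in dimension `j - 1`. -/
noncomputable def greg {V : Type} (G : SimpleGraph V) : ℕ :=
  sSup { j : ℕ |
    ∃ S : Set V, reducedHomologyNontrivial (indRealization (G.induce S)) ((j : ℤ) - 1) }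

/-- `X, Y : Fin k → Finset V` describe a partition of the vertex set of `G`
into `k` (not necessarily induced) bicliques with sides `X i` and `Y i`. -/
def IsBicliquePartition (G : SimpleGraph V) (k : ℕ) (X Y : Fin k → Finset V) : Prop :=
  (∀ i, (X i).Nonempty) ∧ (∀ i, Disjoint (X i) (Y i)) ∧
  (∀ i, ∀ x ∈ X i, ∀ y ∈ Y i, G.Adj x y) ∧
  (∀ v : V, ∃! i : Fin k, v ∈ X i ∨ v ∈ Y i)

/-- The biclique vertex partition number `bp G`. -/
noncomputable def bp (G : SimpleGraph V) : ℕ :=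
  sInf { k | ∃ X Y : Fin k → Finset V, IsBicliquePartition G k X Y }

/-- `γ(A, G)`: the least size of a vertex set dominating `A`. -/
noncomputable def domNum (G : SimpleGraph V) (A : Set V) : ℕ :=
  sInf { n | ∃ D : Finset V, D.card = n ∧ ∀ a ∈ A, ∃ d ∈ D, d = a ∨ G.Adj d a }

/-- The domination number `γ(G)`. -/
noncomputable def gamma (G : SimpleGraph V) : ℕ := domNum G Set.univ

/-- The independence domination number `γ^i(G)`: the maximum of `γ(I, G)` over
independent sets `I` consisting of non-isolated vertices. -/
noncomputable def iDom (G : SimpleGraph V) : ℕ :=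
  sSup { n | ∃ I : Set V, (∀ v ∈ I, ∃ w, G.Adj v w) ∧
      (∀ u ∈ I, ∀ v ∈ I, ¬ G.Adj u v) ∧ n = domNum G I }

/-- `M` is an induced matching of `G`. -/
def IsInducedMatching (G : SimpleGraph V) (M : Finset (Sym2 V)) : Prop :=
  ((M : Set (Sym2 V)) ⊆ G.edgeSet) ∧
  ∀ e ∈ M, ∀ f ∈ M, e ≠ f → ∀ u ∈ e, ∀ v ∈ f, u ≠ v ∧ ¬ G.Adj u v

/-- The induced matching number of `G`. -/
noncomputable def imNum (G : SimpleGraph V) : ℕ :=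
  sSup { n | ∃ M : Finset (Sym2 V), IsInducedMatching G M ∧ M.card = n }

/-- A simple vertex: the neighborhoods of its neighbors are linearly
ordered by inclusion. -/
def IsSimpleVertex (G : SimpleGraph V) (x : V) : Prop :=
  ∀ u v : V, G.Adj x u → G.Adj x v →
    G.neighborSet u ⊆ G.neighborSet v ∨ G.neighborSet v ⊆ G.neighborSet u

/-- A bisimplicial edge `uv`: every vertex of `N(u) \ {v}` is adjacent to
every vertex of `N(v) \ {u}`, i.e. `N[e]` induces a complete bipartite graph. -/
def IsBisimplicialEdge (G : SimpleGraph V) (u v : V) : Prop :=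
  G.Adj u v ∧ ∀ a b : V, G.Adj u a → a ≠ v → G.Adj v b → b ≠ u → G.Adj a b

/-- A chordal bipartite graph: bipartite with no induced cycle of length
greater than four. -/
def ChordalBipartite (G : SimpleGraph V) : Prop :=
  G.Colorable 2 ∧ ∀ n : ℕ, 4 < n → IsEmpty (cycleGraph n ↪g G)

/-- Attach a pendant vertex (whisker) `w : W` at the vertex `φ w` for each `w`. -/
def addPendants (G : SimpleGraph V) (φ : W → V) : SimpleGraph (V ⊕ W) where
  Adj x y :=
    match x, y with
    | Sum.inl a, Sum.inl b => G.Adj a b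
    | Sum.inl a, Sum.inr w => a = φ w
    | Sum.inr w, Sum.inl a => a = φ w
    | Sum.inr _, Sum.inr _ => False
  symm := ⟨by
    rintro (a | w) (b | x) h
    · exact h.symm
    · exact h
    · exact h
    · exact h.elim⟩
  loopless := ⟨by
    rintro (a | w) h
    · exact G.loopless.irrefl a h
    · exact h.elim⟩

/-- The closed neighborhood, inside the vertex set `Ws`, of the edge `uv`. -/
def closedEdgeNbhdOn (G : SimpleGraph V) (Ws : Set V) (u v : V) : Set V :=
  {w ∈ Ws | w = u ∨ w = v ∨ G.Adj u w ∨ G.Adj v w}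

/-- The vertex sets `B_i` remaining after successively removing the closed
neighborhoods of the edges `e 0, e 1, …`. -/
def remSet (G : SimpleGraph V) (e : ℕ → V × V) : ℕ → Set V
  | 0 => Set.univ
  | i + 1 => remSet G e i \ closedEdgeNbhdOn G (remSet G e i) (e i).1 (e i).2

/-- A simple vertex of the subgraph induced on `Ws`. -/
def SimpleVertexOn (G : SimpleGraph V) (Ws : Set V) (x : V) : Prop :=
  x ∈ Ws ∧ ∀ u ∈ Ws, ∀ v ∈ Ws, G.Adj x u → G.Adj x v →
    ({a ∈ Ws | G.Adj u a} ⊆ {a ∈ Ws | G.Adj v a} ∨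
     {a ∈ Ws | G.Adj v a} ⊆ {a ∈ Ws | G.Adj u a})

/-- A bisimplicial edge of the subgraph induced on `Ws`. -/
def BisimplicialOn (G : SimpleGraph V) (Ws : Set V) (u v : V) : Prop :=
  u ∈ Ws ∧ v ∈ Ws ∧ G.Adj u v ∧
    ∀ a ∈ Ws, ∀ b ∈ Ws, G.Adj u a → a ≠ v → G.Adj v b → b ≠ u → G.Adj a b

/-- `e 0, …, e (k-1)` is a biclique elimination sequence for `G`. -/
def IsBES (G : SimpleGraph V) (k : ℕ) (e : ℕ → V × V) : Prop :=
  (∀ i < k, BisimplicialOn G (remSet G e i) (e i).1 (e i).2) ∧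
  ∀ u ∈ remSet G e k, ∀ v ∈ remSet G e k, ¬ G.Adj u v

/-- A simple biclique elimination sequence. -/
def IsSimpleBES (G : SimpleGraph V) (k : ℕ) (e : ℕ → V × V) : Prop :=
  IsBES G k e ∧
  ∀ i < k, SimpleVertexOn G (remSet G e i) (e i).1 ∨
           SimpleVertexOn G (remSet G e i) (e i).2

/-- A complete simple biclique elimination sequence: no deletion step ever
leaves an isolated vertex behind. -/
def IsCompleteSBES (G : SimpleGraph V) (k : ℕ) (e : ℕ → V × V) : Prop :=
  IsSimpleBES G k e ∧
  ∀ i < k, ∀ w ∈ remSet G e (i + 1), ∃ w' ∈ remSet G e (i + 1), G.Adj w w'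

/-- `v` is covered by (incident to) an edge of `M`. -/
def coveredBy (M : Finset (Sym2 V)) (v : V) : Prop := ∃ e ∈ M, v ∈ e

/-- The class `Γ`: connected bipartite graphs of minimum degree at least two,
with an induced matching `M` with `|M| > |V|/3` such that every uncovered
vertex is adjacent to endpoints of at least two distinct edges of `M`. -/
def InGamma (G : SimpleGraph V) (M : Finset (Sym2 V)) : Prop :=
  G.Colorable 2 ∧ G.Connected ∧
  (∀ v : V, ∃ w w' : V, w ≠ w' ∧ G.Adj v w ∧ G.Adj v w') ∧
  IsInducedMatching G M ∧
  3 * M.card > Nat.card V ∧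
  (∀ v : V, ¬ coveredBy M v →
    ∃ e ∈ M, ∃ f ∈ M, e ≠ f ∧ (∃ x ∈ e, G.Adj v x) ∧ (∃ y ∈ f, G.Adj v y))

/-! The realization of `Ind(S(K_{n,m}))` is the unit-sum slice of the cone `K` of nonnegative
weightings with independent support, so it is homotopy equivalent to `K \ 0`. Sending a
weighting to "vertex weight minus the total weight of the incident subdivision vertices" maps `K`
linearly onto the cone `C = {z ∈ ℝ^{n+m} | ∑ₐ zₐ⁻ = ∑_b z_b⁻}`. Putting the positive parts of
`z` on the vertices and the product coupling of its negative parts on the edges is a section,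
and the segment from a weighting to the section of its image stays in `K`; hence
`K \ 0 ≃ C \ 0`. Along `e = (1, …, 1, -1, …, -1)` the function `∑ₐ zₐ⁻ - ∑_b z_b⁻` is
antitone, and beyond its last zero it decreases with slope at most `-1`, so every line parallel
to `e` meets `C` in a nonempty segment whose upper end is a Lipschitz function of the line.
Hence `C \ 0` is homotopy equivalent to a punctured hyperplane transverse to `e`, that is, to a
punctured `ℝ^{n+m-1}`, and so to `S^{n+m-2}`. -/

open scoped ContinuousMap

noncomputable section

section SegmentHomotopy

variable {X Y E : Type*} [AddCommGroup E] [Module ℝ E]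

theorem segment_smul_self_subset {S : Set E} (hS : ∀ x ∈ S, ∀ t : ℝ, 0 < t → t • x ∈ S)
    {x : E} (hx : x ∈ S) {c : ℝ} (hc : 0 < c) : segment ℝ (c • x) x ⊆ S := by
  rintro _ ⟨a, b, ha, hb, hab, rfl⟩
  rw [smul_smul, ← add_smul]
  refine hS x hx _ ?_
  rcases ha.eq_or_lt with rfl | ha
  · linarith
  · positivity

theorem segment_subset_diff_zero {F : Type*} [AddCommGroup F] [Module ℝ F] {A : Set E}
    (ℓ : E →ₗ[ℝ] F) {x y : E} (hA : segment ℝ x y ⊆ A) (hxy : ℓ x = ℓ y) (hy : ℓ y ≠ 0) :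
    segment ℝ x y ⊆ A \ {0} := by
  rintro _ hz
  refine ⟨hA hz, fun h0 => hy ?_⟩
  obtain ⟨a, b, -, -, hab, rfl⟩ := hz
  have hℓ : ℓ (a • x + b • y) = ℓ y := by
    rw [map_add, map_smul, map_smul, hxy, ← add_smul, hab, one_smul]
  rwa [Set.mem_singleton_iff.1 h0, map_zero, eq_comm] at hℓ

variable [TopologicalSpace X] [TopologicalSpace Y] [TopologicalSpace E] [IsTopologicalAddGroup E]
  [ContinuousSMul ℝ E]

theorem homotopic_of_segment_subset {S : Set E} {f g : C(X, S)}
    (h : ∀ x, segment ℝ (f x : E) (g x) ⊆ S) : f.Homotopic g :=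
  ⟨{ toFun := fun p => ⟨AffineMap.lineMap (f p.2 : E) (g p.2) (p.1 : ℝ),
        h p.2 (lineMap_mem_segment ℝ _ _ ⟨p.1.2.1, p.1.2.2⟩)⟩
     continuous_toFun := by
       refine Continuous.subtype_mk ?_ _
       simp only [AffineMap.lineMap_apply_module]
       fun_prop
     map_zero_left := fun x => by simp
     map_one_left := fun x => by simp }⟩

def homotopyEquivOfSection {S : Set E} (p : C(S, Y)) (s : C(Y, S)) (hps : ∀ y, p (s y) = y)
    (hseg : ∀ x : S, segment ℝ (s (p x) : E) x ⊆ S) : S ≃ₕ Y where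
  toFun := p
  invFun := s
  left_inv := homotopic_of_segment_subset (f := s.comp p) (g := .id S) hseg
  right_inv := by
    convert ContinuousMap.Homotopic.refl (ContinuousMap.id Y)
    ext1 y
    exact hps y

def radialHomotopyEquiv {S T : Set E} (ν : E → ℝ) (hν : Continuous ν)
    (hS : ∀ x ∈ S, ∀ t : ℝ, 0 < t → t • x ∈ S) (hνS : ∀ x ∈ S, 0 < ν x)
    (hTS : T ⊆ S) (hνT : ∀ x ∈ T, ν x = 1) (hnormalize : ∀ x ∈ S, (ν x)⁻¹ • x ∈ T) :
    S ≃ₕ T :=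
  homotopyEquivOfSection
    ⟨fun x : S => ⟨(ν x)⁻¹ • (x : E), hnormalize x x.2⟩,
      (((hν.comp continuous_subtype_val).inv₀ fun x : S => (hνS x x.2).ne').smul
        continuous_subtype_val).subtype_mk _⟩
    ⟨fun x : T => ⟨x, hTS x.2⟩, continuous_subtype_val.subtype_mk _⟩
    (fun x => Subtype.ext <| by simp [hνT x x.2])
    (fun x => segment_smul_self_subset hS x.2 (inv_pos.2 (hνS x x.2)))

def puncturedHomotopyEquivSphere (F : Type*) [NormedAddCommGroup F] [NormedSpace ℝ F] :
    ({0}ᶜ : Set F) ≃ₕ Metric.sphere (0 : F) 1 :=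
  radialHomotopyEquiv norm continuous_norm
    (fun x hx t ht => smul_ne_zero ht.ne' hx) (fun x hx => norm_pos_iff.2 hx)
    (fun x hx => ne_zero_of_mem_unit_sphere ⟨x, hx⟩)
    (fun x hx => by simpa using hx)
    (fun x hx => by simpa [norm_smul] using inv_mul_cancel₀ (norm_ne_zero_iff.2 hx))

end SegmentHomotopy

def _root_.ContinuousLinearEquiv.puncturedHomeomorph {F G : Type*} [AddCommGroup F] [Module ℝ F]
    [TopologicalSpace F] [AddCommGroup G] [Module ℝ G] [TopologicalSpace G]
    (L : F ≃L[ℝ] G) : ({0}ᶜ : Set F) ≃ₜ ({0}ᶜ : Set G) :=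
  L.toHomeomorph.subtype fun x => by simp

section RealFunctions

theorem posPart_sub_of_imp {p q : ℝ} (hp : 0 ≤ p) (hq : 0 ≤ q) (h : q ≠ 0 → p = 0) :
    (p - q)⁺ = p := by
  rcases eq_or_ne q 0 with rfl | hq0
  · simpa using hp
  · simp [h hq0, hq]

theorem negPart_sub_of_imp {p q : ℝ} (hp : 0 ≤ p) (hq : 0 ≤ q) (h : q ≠ 0 → p = 0) :
    (p - q)⁻ = q := by
  rcases eq_or_ne q 0 with rfl | hq0
  · simpa using hp
  · simp [h hq0, hq]

theorem continuous_mul_div_of_abs_le {X : Type*} [TopologicalSpace X] {u v w : X → ℝ}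
    (hu : Continuous u) (hv : Continuous v) (hw : Continuous w)
    (huw : ∀ x, |u x| ≤ w x) (hvw : ∀ x, |v x| ≤ w x) :
    Continuous fun x => u x * v x / w x := by
  refine continuous_iff_continuousAt.2 fun x₀ => ?_
  rcases eq_or_ne (w x₀) 0 with hw₀ | hw₀
  · have hu₀ : u x₀ = 0 := abs_nonpos_iff.1 (hw₀ ▸ huw x₀)
    have hbound : ∀ x, ‖u x * v x / w x‖ ≤ |u x| := fun x => by
      rw [Real.norm_eq_abs, abs_div, abs_mul, mul_div_assoc]
      refine mul_le_of_le_one_right (abs_nonneg _) (div_le_one_of_le₀ ?_ (abs_nonneg _))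
      exact (hvw x).trans (le_abs_self _)
    have hlim : Filter.Tendsto (fun x => |u x|) (nhds x₀) (nhds 0) := by
      simpa [hu₀] using hu.abs.tendsto x₀
    simpa [ContinuousAt, hu₀] using squeeze_zero_norm hbound hlim
  · exact ((hu.mul hv).continuousAt).div hw.continuousAt hw₀

theorem exists_root_of_slope_le {k : ℝ → ℝ} (hk : Continuous k) {c : ℝ}
    (hle : ∀ s ≤ c, 0 ≤ k s) (hslope : ∀ s s', c ≤ s → s ≤ s' → k s' + (s' - s) ≤ k s) :
    ∃ r, (∀ s ≤ r, 0 ≤ k s) ∧ ∀ s, r ≤ s → k s ≤ r - s := by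
  have hc := hle c le_rfl
  obtain ⟨r, ⟨hcr, -⟩, hr⟩ : ∃ r ∈ Set.Icc c (c + k c), k r = 0 := by
    refine intermediate_value_Icc' (by linarith) hk.continuousOn ⟨?_, hc⟩
    linarith [hslope c (c + k c) le_rfl (by linarith)]
  refine ⟨r, fun s hs => ?_, fun s hs => ?_⟩
  · rcases le_total s c with hsc | hcs
    · exact hle s hsc
    · linarith [hslope s r hcs hs]
  · linarith [hslope r s hcr hs]

theorem abs_sub_le_of_roots {k k' : ℝ → ℝ} {r r' δ : ℝ}
    (hk₁ : ∀ s ≤ r, 0 ≤ k s) (hk₂ : ∀ s, r ≤ s → k s ≤ r - s)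
    (hk'₁ : ∀ s ≤ r', 0 ≤ k' s) (hk'₂ : ∀ s, r' ≤ s → k' s ≤ r' - s)
    (hδ : ∀ s, |k s - k' s| ≤ δ) : |r - r'| ≤ δ := by
  rw [abs_sub_le_iff]
  constructor
  · rcases le_total r r' with h | h
    · linarith [abs_nonneg (k r - k' r), hδ r]
    · linarith [hk₁ r le_rfl, hk'₂ r h, (abs_le.1 (hδ r)).2]
  · rcases le_total r' r with h | h
    · linarith [abs_nonneg (k r - k' r), hδ r]
    · linarith [hk'₁ r' le_rfl, hk₂ r' h, (abs_le.1 (hδ r')).1]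

end RealFunctions

section IndependenceComplex

def indCone (G : SimpleGraph V) : Set (V → ℝ) :=
  {f | (∀ v, 0 ≤ f v) ∧ ∀ u v, f u ≠ 0 → f v ≠ 0 → ¬ G.Adj u v}

theorem smul_mem_indCone {G : SimpleGraph V} {f : V → ℝ} (hf : f ∈ indCone G) {t : ℝ}
    (ht : 0 ≤ t) : t • f ∈ indCone G :=
  ⟨fun v => mul_nonneg ht (hf.1 v), fun u v hu hv =>
    hf.2 u v (right_ne_zero_of_mul hu) (right_ne_zero_of_mul hv)⟩

theorem sum_pos_of_mem_indCone_diff [Fintype V] {G : SimpleGraph V} {f : V → ℝ}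
    (hf : f ∈ indCone G \ {0}) : 0 < ∑ v, f v := by
  obtain ⟨v, hv⟩ := Function.ne_iff.1 hf.2
  exact Finset.sum_pos' (fun v _ => hf.1.1 v)
    ⟨v, Finset.mem_univ v, lt_of_le_of_ne (hf.1.1 v) (Ne.symm hv)⟩

def indRealizationHomotopyEquivIndCone [Finite V] (G : SimpleGraph V) :
    indRealization G ≃ₕ ↥(indCone G \ {0}) :=
  letI := Fintype.ofFinite V
  -- `T` is the carrier of `indRealization G`.
  (radialHomotopyEquiv (S := indCone G \ {0})
    (T := {f | (∀ v, 0 ≤ f v) ∧ (∑ᶠ v, f v) = 1 ∧ ∀ u v, f u ≠ 0 → f v ≠ 0 → ¬ G.Adj u v})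
    (fun f : V → ℝ => ∑ v, f v) (by fun_prop)
    (fun f hf t ht => ⟨smul_mem_indCone hf.1 ht.le, smul_ne_zero ht.ne' hf.2⟩)
    (fun f hf => sum_pos_of_mem_indCone_diff hf)
    (fun f ⟨h0, hsum, hind⟩ => ⟨⟨h0, hind⟩, fun h => by simp [Set.mem_singleton_iff.1 h] at hsum⟩)
    (fun f ⟨_, hsum, _⟩ => (finsum_eq_sum_of_fintype f).symm.trans hsum)
    (fun f hf => by
      obtain ⟨h0, hind⟩ := smul_mem_indCone hf.1 (inv_pos.2 (sum_pos_of_mem_indCone_diff hf)).le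
      refine ⟨h0, ?_, hind⟩
      rw [finsum_eq_sum_of_fintype]
      simp only [Pi.smul_apply, smul_eq_mul, ← Finset.mul_sum]
      exact inv_mul_cancel₀ (sum_pos_of_mem_indCone_diff hf).ne')).symm

theorem mem_indCone_subdiv_iff {G : SimpleGraph V} {f : V ⊕ G.edgeSet → ℝ} :
    f ∈ indCone (subdiv G) ↔
      (∀ x, 0 ≤ f x) ∧ ∀ v (e : G.edgeSet), v ∈ (e : Sym2 V) → f (.inl v) = 0 ∨ f (.inr e) = 0 := by
  refine ⟨fun ⟨h0, h⟩ => ⟨h0, fun v e hv => ?_⟩, fun ⟨h0, h⟩ => ⟨h0, ?_⟩⟩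
  · by_contra! hne
    exact h _ _ hne.1 hne.2 hv
  · rintro (u | e) (v | e') hu hv hadj
    · exact hadj
    · exact (h u e' hadj).elim hu hv
    · exact (h v e hadj).elim hv hu
    · exact hadj

theorem segment_subset_indCone_subdiv {G : SimpleGraph V} {f g : V ⊕ G.edgeSet → ℝ}
    (hf : f ∈ indCone (subdiv G)) (hg : g ∈ indCone (subdiv G))
    (hfg : ∀ v, f (.inl v) = g (.inl v)) : segment ℝ f g ⊆ indCone (subdiv G) := by
  rw [mem_indCone_subdiv_iff] at hf hg
  rintro _ ⟨a, b, ha, hb, -, rfl⟩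
  refine mem_indCone_subdiv_iff.2 ⟨fun x => ?_, fun v e hv => ?_⟩
  · simp only [Pi.add_apply, Pi.smul_apply, smul_eq_mul]
    exact add_nonneg (mul_nonneg ha (hf.1 x)) (mul_nonneg hb (hg.1 x))
  · simp only [Pi.add_apply, Pi.smul_apply, smul_eq_mul]
    rcases hf.2 v e hv with h | h
    · left; simp [h, ← hfg v]
    · rcases hg.2 v e hv with h' | h'
      · left; simp [h', hfg v]
      · right; simp [h, h']

end IndependenceComplex

section BalancedCone

variable {α β : Type}

variable (α β) in
def tilt : α ⊕ β → ℝ := Sum.elim (fun _ => 1) (fun _ => -1)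

variable (α) in
def hyperplane (b₀ : β) : Submodule ℝ (α ⊕ β → ℝ) :=
  LinearMap.ker (LinearMap.proj (R := ℝ) (φ := fun _ => ℝ) (Sum.inr b₀))

def tiltProj (b₀ : β) : (α ⊕ β → ℝ) →ₗ[ℝ] hyperplane α b₀ :=
  (LinearMap.id + (LinearMap.proj (Sum.inr b₀)).smulRight (tilt α β)).codRestrict _
    fun z => by simp [hyperplane, tilt]

theorem coe_tiltProj (b₀ : β) (z : α ⊕ β → ℝ) :
    (tiltProj b₀ z : α ⊕ β → ℝ) = z + z (.inr b₀) • tilt α β := rfl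

theorem tiltProj_add_smul_tilt {b₀ : β} (w : hyperplane α b₀) (s : ℝ) :
    tiltProj b₀ ((w : α ⊕ β → ℝ) + s • tilt α β) = w := by
  have hw : (w : α ⊕ β → ℝ) (.inr b₀) = 0 := w.2
  ext1
  rw [coe_tiltProj]
  simp [hw, tilt]

theorem coe_tiltProj_add_smul_tilt_eq_self (b₀ : β) (z : α ⊕ β → ℝ) :
    (tiltProj b₀ z : α ⊕ β → ℝ) + (-z (.inr b₀)) • tilt α β = z := by
  rw [coe_tiltProj]; module

variable [Fintype α] [Fintype β]

theorem finrank_hyperplane (b₀ : β) :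
    Module.finrank ℝ (hyperplane α b₀) = Fintype.card α + Fintype.card β - 1 := by
  have hsurj : LinearMap.range (LinearMap.proj (R := ℝ) (φ := fun _ : α ⊕ β => ℝ) (.inr b₀)) = ⊤ :=
    LinearMap.range_eq_top.2 fun t => ⟨fun _ => t, rfl⟩
  have := LinearMap.finrank_range_add_finrank_ker
    (LinearMap.proj (R := ℝ) (φ := fun _ : α ⊕ β => ℝ) (.inr b₀))
  rw [hsurj, finrank_top, Module.finrank_self, Module.finrank_fintype_fun_eq_card,
    Fintype.card_sum] at this
  rw [hyperplane]
  omega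

def imbalance (z : α ⊕ β → ℝ) : ℝ := ∑ a, (z (.inl a))⁻ - ∑ b, (z (.inr b))⁻

variable (α β) in
def balancedCone : Set (α ⊕ β → ℝ) := {z | imbalance z = 0}

theorem imbalance_add_smul_tilt (z : α ⊕ β → ℝ) (s : ℝ) :
    imbalance (z + s • tilt α β) = ∑ a, (z (.inl a) + s)⁻ - ∑ b, (z (.inr b) - s)⁻ := by
  simp [imbalance, tilt, sub_eq_add_neg]

theorem antitone_imbalance_add_smul_tilt (z : α ⊕ β → ℝ) :
    Antitone fun s : ℝ => imbalance (z + s • tilt α β) := by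
  intro s s' hss'
  simp only [imbalance_add_smul_tilt]
  gcongr with a _ b _
  · exact negPart_anti (by linarith)
  · exact negPart_anti (by linarith)

theorem abs_imbalance_sub_le (z z' : α ⊕ β → ℝ) :
    |imbalance z - imbalance z'| ≤ ∑ i, |z i - z' i| := by
  have key : ∀ x y : ℝ, |x⁻ - y⁻| ≤ |x - y| := fun x y => by
    simpa [Real.dist_eq] using (lipschitzWith_negPart (α := ℝ)).dist_le_mul x y
  calc |imbalance z - imbalance z'|
      = |∑ a, ((z (.inl a))⁻ - (z' (.inl a))⁻) - ∑ b, ((z (.inr b))⁻ - (z' (.inr b))⁻)| := by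
        simp only [imbalance, Finset.sum_sub_distrib]; ring_nf
    _ ≤ ∑ a, |(z (.inl a))⁻ - (z' (.inl a))⁻| + ∑ b, |(z (.inr b))⁻ - (z' (.inr b))⁻| :=
        (abs_sub _ _).trans (add_le_add (Finset.abs_sum_le_sum_abs _ _)
          (Finset.abs_sum_le_sum_abs _ _))
    _ ≤ ∑ i, |z i - z' i| := by
        rw [Fintype.sum_sum_type]
        exact add_le_add (Finset.sum_le_sum fun a _ => key _ _)
          (Finset.sum_le_sum fun b _ => key _ _)

theorem eq_zero_of_smul_tilt_mem_balancedCone [Nonempty α] [Nonempty β] {s : ℝ}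
    (h : s • tilt α β ∈ balancedCone α β) : s = 0 := by
  have hcard : (0 : ℝ) < Fintype.card α ∧ (0 : ℝ) < Fintype.card β :=
    ⟨Nat.cast_pos.2 Fintype.card_pos, Nat.cast_pos.2 Fintype.card_pos⟩
  change imbalance _ = 0 at h
  rw [← zero_add (s • tilt α β), imbalance_add_smul_tilt] at h
  simp only [Pi.zero_apply, zero_add, zero_sub, negPart_neg, Finset.sum_const,
    Finset.card_univ, nsmul_eq_mul] at h
  rcases lt_trichotomy s 0 with hs | hs | hs
  · rw [posPart_eq_zero.2 hs.le] at h
    nlinarith [negPart_pos hs]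
  · exact hs
  · rw [negPart_eq_zero.2 hs.le] at h
    nlinarith [posPart_pos hs]

theorem segment_subset_balancedCone {x : α ⊕ β → ℝ} {s s' : ℝ}
    (hs : x + s • tilt α β ∈ balancedCone α β) (hs' : x + s' • tilt α β ∈ balancedCone α β) :
    segment ℝ (x + s • tilt α β) (x + s' • tilt α β) ⊆ balancedCone α β := by
  rintro _ ⟨a, b, ha, hb, hab, rfl⟩
  have hcomb : a • (x + s • tilt α β) + b • (x + s' • tilt α β) =
      x + (a * s + b * s') • tilt α β := by
    obtain rfl : b = 1 - a := by linarith
    module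
  have hu : a * s + b * s' ∈ Set.uIcc s s' := segment_eq_uIcc s s' ▸ ⟨a, b, ha, hb, hab, rfl⟩
  have hanti := antitone_imbalance_add_smul_tilt (α := α) (β := β) x
  rw [hcomb]
  change imbalance _ = 0 at hs hs' ⊢
  rcases le_total s s' with h | h
  · rw [Set.uIcc_of_le h] at hu
    exact le_antisymm (hs ▸ hanti hu.1) (hs' ▸ hanti hu.2)
  · rw [Set.uIcc_of_ge h] at hu
    exact le_antisymm (hs' ▸ hanti hu.1) (hs ▸ hanti hu.2)

theorem tiltProj_ne_zero [Nonempty α] (b₀ : β) {z : α ⊕ β → ℝ}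
    (hz : z ∈ balancedCone α β \ {0}) : tiltProj b₀ z ≠ 0 := by
  have : Nonempty β := ⟨b₀⟩
  intro h
  have hz' := coe_tiltProj_add_smul_tilt_eq_self b₀ z
  rw [h, Submodule.coe_zero, zero_add] at hz'
  have hs := eq_zero_of_smul_tilt_mem_balancedCone (hz' ▸ hz.1)
  exact hz.2 (by rw [← hz', hs, zero_smul]; rfl)

-- Beyond `min_b z_b` the `β`-sum grows at least as fast as `s`, so the imbalance drops with
-- slope at most `-1`; before it only the `α`-sum, which is nonnegative, is left.
theorem exists_tiltRoot [Nonempty β] (z : α ⊕ β → ℝ) :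
    ∃ r, (∀ s ≤ r, 0 ≤ imbalance (z + s • tilt α β)) ∧
      ∀ s, r ≤ s → imbalance (z + s • tilt α β) ≤ r - s := by
  obtain ⟨b₀, hb₀⟩ := Finite.exists_min fun b => z (.inr b)
  refine exists_root_of_slope_le (c := z (.inr b₀)) ?_ (fun s hs => ?_) (fun s s' hs hss' => ?_)
  · simp only [imbalance_add_smul_tilt]
    fun_prop
  · have hzero : ∑ b, (z (.inr b) - s)⁻ = 0 :=
      Finset.sum_eq_zero fun b _ => negPart_eq_zero.2 (by linarith [hb₀ b])
    rw [imbalance_add_smul_tilt, hzero, sub_zero]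
    exact Finset.sum_nonneg fun a _ => negPart_nonneg _
  · simp only [imbalance_add_smul_tilt]
    have hα : ∑ a, (z (.inl a) + s')⁻ ≤ ∑ a, (z (.inl a) + s)⁻ :=
      Finset.sum_le_sum fun a _ => negPart_anti (by linarith)
    have hβ : (z (.inr b₀) - s')⁻ - (z (.inr b₀) - s)⁻ ≤
        ∑ b, ((z (.inr b) - s')⁻ - (z (.inr b) - s)⁻) :=
      Finset.single_le_sum (f := fun b => (z (.inr b) - s')⁻ - (z (.inr b) - s)⁻)
        (fun b _ => sub_nonneg.2 (negPart_anti (by linarith))) (Finset.mem_univ b₀)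
    rw [negPart_eq_neg.2 (by linarith), negPart_eq_neg.2 (by linarith),
      Finset.sum_sub_distrib] at hβ
    linarith

section TiltRoot

variable [Nonempty β]

/-- The upper end of the segment in which the line `z + ℝ • tilt` meets the balanced cone. -/
def tiltRoot (z : α ⊕ β → ℝ) : ℝ := (exists_tiltRoot z).choose

theorem imbalance_nonneg_of_le_tiltRoot {z : α ⊕ β → ℝ} {s : ℝ} (hs : s ≤ tiltRoot z) :
    0 ≤ imbalance (z + s • tilt α β) :=
  (exists_tiltRoot z).choose_spec.1 s hs

theorem imbalance_le_of_tiltRoot_le {z : α ⊕ β → ℝ} {s : ℝ} (hs : tiltRoot z ≤ s) :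
    imbalance (z + s • tilt α β) ≤ tiltRoot z - s :=
  (exists_tiltRoot z).choose_spec.2 s hs

theorem add_tiltRoot_smul_mem_balancedCone (z : α ⊕ β → ℝ) :
    z + tiltRoot z • tilt α β ∈ balancedCone α β :=
  le_antisymm (by simpa using imbalance_le_of_tiltRoot_le (z := z) le_rfl)
    (imbalance_nonneg_of_le_tiltRoot le_rfl)

theorem lipschitzWith_tiltRoot :
    LipschitzWith (Fintype.card (α ⊕ β)) (tiltRoot : (α ⊕ β → ℝ) → ℝ) := by
  refine LipschitzWith.of_dist_le_mul fun z z' => ?_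
  rw [Real.dist_eq, NNReal.coe_natCast]
  refine abs_sub_le_of_roots (fun s => imbalance_nonneg_of_le_tiltRoot)
    (fun s => imbalance_le_of_tiltRoot_le) (fun s => imbalance_nonneg_of_le_tiltRoot)
    (fun s => imbalance_le_of_tiltRoot_le) fun s => ?_
  refine (abs_imbalance_sub_le _ _).trans ?_
  calc ∑ i, |(z + s • tilt α β) i - (z' + s • tilt α β) i|
      ≤ ∑ _i : α ⊕ β, dist z z' :=
        Finset.sum_le_sum fun i _ => by simpa [Real.dist_eq] using dist_le_pi_dist z z' i
    _ = _ := by simp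

end TiltRoot

def balancedConeHomotopyEquivHyperplane [Nonempty α] (b₀ : β) :
    ↥(balancedCone α β \ {0}) ≃ₕ ↥({0}ᶜ : Set (hyperplane α b₀)) :=
  haveI : Nonempty β := ⟨b₀⟩
  have hval : Continuous fun w : ↥({0}ᶜ : Set (hyperplane α b₀)) => (w : α ⊕ β → ℝ) :=
    continuous_subtype_val.comp continuous_subtype_val
  homotopyEquivOfSection
    ⟨fun z => ⟨tiltProj b₀ z, tiltProj_ne_zero b₀ z.2⟩,
      ((tiltProj b₀).continuous_of_finiteDimensional.comp continuous_subtype_val).subtype_mk _⟩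
    ⟨fun w => ⟨(w : α ⊕ β → ℝ) + tiltRoot (w : α ⊕ β → ℝ) • tilt α β,
        add_tiltRoot_smul_mem_balancedCone _, fun h => w.2 <| by
          rw [← tiltProj_add_smul_tilt w.1 (tiltRoot (w : α ⊕ β → ℝ)),
            Set.mem_singleton_iff.1 h, map_zero]; rfl⟩,
      (hval.add ((lipschitzWith_tiltRoot.continuous.comp hval).smul continuous_const)).subtype_mk _⟩
    (fun w => Subtype.ext (tiltProj_add_smul_tilt w.1 _))
    (fun z => by
      refine segment_subset_diff_zero (tiltProj b₀) ?_ (tiltProj_add_smul_tilt _ _)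
        (tiltProj_ne_zero b₀ z.2)
      have hz := coe_tiltProj_add_smul_tilt_eq_self b₀ (z : α ⊕ β → ℝ)
      have hseg := segment_subset_balancedCone
        (add_tiltRoot_smul_mem_balancedCone (tiltProj b₀ (z : α ⊕ β → ℝ) : α ⊕ β → ℝ))
        (hz.symm ▸ z.2.1)
      rwa [hz] at hseg)

end BalancedCone

section SubdividedCompleteBipartite

variable {α β : Type}

variable (α β) in
def edgeEquiv : α × β ≃ (completeBipartiteGraph α β).edgeSet :=
  (Equiv.ofInjective (fun p : α × β => (s(.inl p.1, .inr p.2) : Sym2 (α ⊕ β)))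
    (by rintro ⟨a, b⟩ ⟨a', b'⟩ h; simpa using h)).trans
    (Equiv.setCongr edgeSet_completeBipartiteGraph.symm)

theorem mem_edgeEquiv_iff {p : α × β} {v : α ⊕ β} :
    v ∈ (edgeEquiv α β p : Sym2 (α ⊕ β)) ↔ v = .inl p.1 ∨ v = .inr p.2 :=
  Sym2.mem_iff

def edgeWeight (f : (α ⊕ β) ⊕ (completeBipartiteGraph α β).edgeSet → ℝ) (a : α) (b : β) : ℝ :=
  f (.inr (edgeEquiv α β (a, b)))

section ProductLift

variable [Fintype α]

/-- The edge weights are the product coupling of the negative parts of `z`; `x / 0 = 0` gives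
the right value when `∑ₐ zₐ⁻ = 0`. -/
def productLift (z : α ⊕ β → ℝ) : (α ⊕ β) ⊕ (completeBipartiteGraph α β).edgeSet → ℝ :=
  Sum.elim (fun i => (z i)⁺) fun e =>
    (z (.inl ((edgeEquiv α β).symm e).1))⁻ * (z (.inr ((edgeEquiv α β).symm e).2))⁻ /
      ∑ a, (z (.inl a))⁻

theorem edgeWeight_productLift (z : α ⊕ β → ℝ) (a : α) (b : β) :
    edgeWeight (productLift z) a b = (z (.inl a))⁻ * (z (.inr b))⁻ / ∑ a, (z (.inl a))⁻ := by
  simp [edgeWeight, productLift]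

theorem productLift_mem_indCone (z : α ⊕ β → ℝ) :
    productLift z ∈ indCone (subdiv (completeBipartiteGraph α β)) := by
  refine mem_indCone_subdiv_iff.2 ⟨?_, fun v e hv => ?_⟩
  · rintro (i | e)
    · exact posPart_nonneg _
    · exact div_nonneg (mul_nonneg (negPart_nonneg _) (negPart_nonneg _))
        (Finset.sum_nonneg fun _ _ => negPart_nonneg _)
  · obtain ⟨⟨a, b⟩, rfl⟩ := (edgeEquiv α β).surjective e
    change productLift z (.inl v) = 0 ∨ edgeWeight (productLift z) a b = 0
    rw [edgeWeight_productLift]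
    rcases le_total (z v) 0 with h | h
    · exact .inl (posPart_eq_zero.2 h)
    · right
      rcases mem_edgeEquiv_iff.1 hv with rfl | rfl <;> simp [negPart_eq_zero.2 h]

end ProductLift

variable [Fintype α] [Fintype β]

def incidentWeight (f : (α ⊕ β) ⊕ (completeBipartiteGraph α β).edgeSet → ℝ) : α ⊕ β → ℝ :=
  Sum.elim (fun a => ∑ b, edgeWeight f a b) (fun b => ∑ a, edgeWeight f a b)

variable (α β) in
def excess : ((α ⊕ β) ⊕ (completeBipartiteGraph α β).edgeSet → ℝ) →ₗ[ℝ] (α ⊕ β → ℝ) where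
  toFun f i := f (.inl i) - incidentWeight f i
  map_add' f g := by
    ext (a | b) <;> simp [incidentWeight, edgeWeight, Finset.sum_add_distrib] <;> ring
  map_smul' c f := by
    ext (a | b) <;> simp [incidentWeight, edgeWeight, ← Finset.mul_sum] <;> ring

theorem excess_apply (f : (α ⊕ β) ⊕ (completeBipartiteGraph α β).edgeSet → ℝ) (i : α ⊕ β) :
    excess α β f i = f (.inl i) - incidentWeight f i := rfl

section IndCone

variable {f : (α ⊕ β) ⊕ (completeBipartiteGraph α β).edgeSet → ℝ}

theorem incidentWeight_nonneg (hf : f ∈ indCone (subdiv (completeBipartiteGraph α β)))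
    (i : α ⊕ β) : 0 ≤ incidentWeight f i := by
  rcases i with a | b <;> exact Finset.sum_nonneg fun _ _ => hf.1 _

theorem eq_zero_of_incidentWeight_ne_zero
    (hf : f ∈ indCone (subdiv (completeBipartiteGraph α β))) {i : α ⊕ β}
    (h : incidentWeight f i ≠ 0) : f (.inl i) = 0 := by
  have hind := (mem_indCone_subdiv_iff.1 hf).2
  rcases i with a | b
  · obtain ⟨b, -, hb⟩ := Finset.exists_ne_zero_of_sum_ne_zero h
    exact (hind _ _ (mem_edgeEquiv_iff.2 (.inl rfl))).resolve_right hb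
  · obtain ⟨a, -, ha⟩ := Finset.exists_ne_zero_of_sum_ne_zero h
    exact (hind _ _ (mem_edgeEquiv_iff.2 (.inr rfl))).resolve_right ha

theorem posPart_excess (hf : f ∈ indCone (subdiv (completeBipartiteGraph α β))) (i : α ⊕ β) :
    (excess α β f i)⁺ = f (.inl i) :=
  posPart_sub_of_imp (hf.1 _) (incidentWeight_nonneg hf i) (eq_zero_of_incidentWeight_ne_zero hf)

theorem negPart_excess (hf : f ∈ indCone (subdiv (completeBipartiteGraph α β))) (i : α ⊕ β) :
    (excess α β f i)⁻ = incidentWeight f i :=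
  negPart_sub_of_imp (hf.1 _) (incidentWeight_nonneg hf i) (eq_zero_of_incidentWeight_ne_zero hf)

theorem excess_mem_balancedCone (hf : f ∈ indCone (subdiv (completeBipartiteGraph α β))) :
    excess α β f ∈ balancedCone α β := by
  change ∑ a, _ - ∑ b, _ = 0
  simp only [negPart_excess hf, incidentWeight, Sum.elim_inl, Sum.elim_inr]
  rw [Finset.sum_comm, sub_self]

theorem excess_ne_zero (hf : f ∈ indCone (subdiv (completeBipartiteGraph α β))) (hf0 : f ≠ 0) :
    excess α β f ≠ 0 := by
  intro h
  have hvert : ∀ i, f (.inl i) = 0 := fun i => by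
    rw [← posPart_excess hf, h, Pi.zero_apply, posPart_zero]
  have hedge : ∀ a b, edgeWeight f a b = 0 := fun a b => by
    have hrow : incidentWeight f (.inl a) = 0 := by
      rw [← negPart_excess hf, h, Pi.zero_apply, negPart_zero]
    exact (Finset.sum_eq_zero_iff_of_nonneg fun _ _ => hf.1 _).1 hrow b (Finset.mem_univ _)
  refine hf0 (funext fun x => ?_)
  rcases x with i | e
  · exact hvert i
  · obtain ⟨⟨a, b⟩, rfl⟩ := (edgeEquiv α β).surjective e
    exact hedge a b

end IndCone

theorem excess_productLift {z : α ⊕ β → ℝ} (hz : z ∈ balancedCone α β) :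
    excess α β (productLift z) = z := by
  have hsum : ∑ b, (z (.inr b))⁻ = ∑ a, (z (.inl a))⁻ := (sub_eq_zero.1 hz).symm
  have hle : ∀ i, (z i)⁻ ≤ ∑ a, (z (.inl a))⁻ := by
    rintro (a | b)
    · exact Finset.single_le_sum (fun a _ => negPart_nonneg (z (.inl a))) (Finset.mem_univ a)
    · exact hsum ▸ Finset.single_le_sum (fun b _ => negPart_nonneg (z (.inr b)))
        (Finset.mem_univ b)
  have hcancel : ∀ i, (z i)⁻ * (∑ a, (z (.inl a))⁻) / ∑ a, (z (.inl a))⁻ = (z i)⁻ := fun i =>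
    mul_div_cancel_of_imp fun h0 => le_antisymm (h0 ▸ hle i) (negPart_nonneg _)
  ext i
  rw [excess_apply, ← posPart_sub_negPart (z i)]
  congr 1
  rcases i with a | b
  · simp only [incidentWeight, Sum.elim_inl, edgeWeight_productLift]
    rw [← Finset.sum_div, ← Finset.mul_sum, hsum, hcancel]
  · simp only [incidentWeight, Sum.elim_inr, edgeWeight_productLift]
    rw [← Finset.sum_div, ← Finset.sum_mul, mul_comm, hcancel]

theorem continuous_productLift :
    Continuous fun z : ↥(balancedCone α β \ {0}) => productLift (z : α ⊕ β → ℝ) := by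
  have hneg : ∀ i, Continuous fun z : ↥(balancedCone α β \ {0}) => ((z : α ⊕ β → ℝ) i)⁻ :=
    fun i => continuous_negPart.comp ((continuous_apply i).comp continuous_subtype_val)
  refine continuous_pi fun x => ?_
  rcases x with i | e
  · exact continuous_posPart.comp ((continuous_apply i).comp continuous_subtype_val)
  · refine continuous_mul_div_of_abs_le (hneg _) (hneg _)
      (continuous_finsetSum _ fun a _ => hneg _) (fun z => ?_) (fun z => ?_)
    · rw [abs_of_nonneg (negPart_nonneg _)]
      exact Finset.single_le_sum (fun a _ => negPart_nonneg ((z : α ⊕ β → ℝ) (.inl a)))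
        (Finset.mem_univ _)
    · rw [abs_of_nonneg (negPart_nonneg _), sub_eq_zero.1 z.2.1]
      exact Finset.single_le_sum (fun b _ => negPart_nonneg ((z : α ⊕ β → ℝ) (.inr b)))
        (Finset.mem_univ _)

def indConeHomotopyEquivBalancedCone :
    ↥(indCone (subdiv (completeBipartiteGraph α β)) \ {0}) ≃ₕ ↥(balancedCone α β \ {0}) :=
  homotopyEquivOfSection
    ⟨fun f => ⟨excess α β f, excess_mem_balancedCone f.2.1, excess_ne_zero f.2.1 f.2.2⟩,
      ((excess α β).continuous_of_finiteDimensional.comp continuous_subtype_val).subtype_mk _⟩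
    ⟨fun z => ⟨productLift z, productLift_mem_indCone (z : α ⊕ β → ℝ), fun h => z.2.2 <| by
        rw [← excess_productLift z.2.1, Set.mem_singleton_iff.1 h, map_zero]; rfl⟩,
      continuous_productLift.subtype_mk _⟩
    (fun z => Subtype.ext (excess_productLift z.2.1))
    (fun f => segment_subset_diff_zero (excess α β)
      (segment_subset_indCone_subdiv (productLift_mem_indCone _) f.2.1
        fun i => posPart_excess f.2.1 i)
      (excess_productLift (excess_mem_balancedCone f.2.1)) (excess_ne_zero f.2.1 f.2.2))

end SubdividedCompleteBipartite

end

/-- `Ind(S(K_{n,m}))` is homotopy equivalent to a sphere of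
dimension `n + m - 2`. -/
theorem ind_subdiv_completeBipartite_homotopyEquiv_sphere (n m : ℕ)
    (hn : 0 < n) (hm : 0 < m) :
    Nonempty (ContinuousMap.HomotopyEquiv
      (indRealization (subdiv (completeBipartiteGraph (Fin n) (Fin m))))
      (Metric.sphere (0 : EuclideanSpace ℝ (Fin (n + m - 1))) 1)) := by
  have : Nonempty (Fin n) := ⟨⟨0, hn⟩⟩
  let b₀ : Fin m := ⟨0, hm⟩
  have hdim : Module.finrank ℝ (hyperplane (Fin n) b₀) =
      Module.finrank ℝ (EuclideanSpace ℝ (Fin (n + m - 1))) := by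
    simp [finrank_hyperplane]
  exact ⟨(indRealizationHomotopyEquivIndCone _).trans <|
    indConeHomotopyEquivBalancedCone.trans <|
    (balancedConeHomotopyEquivHyperplane b₀).trans <|
    (ContinuousLinearEquiv.ofFinrankEq hdim).puncturedHomeomorph.toHomotopyEquiv.trans <|
    puncturedHomotopyEquivSphere _⟩

end Paper
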